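/- There exists a primitive root g modulo 11527 such that the cosets X_i = g^i·H (0 ≤ i < 34, indices mod 34) of the subgroup H of 34th-power residues in 𝔽_11527^× form a 17-color Directed Ramsey algebra, i.e., with m = 17: (1) for all i, X_i + X_i = ⋃_{j ≠ i} X_j; (2) for all i, X_i + X_{i+17} = {0} ∪ ⋃_{j ∉ {i, i+17}} X_j; (3) for all i, j with i ≠ j and j ≠ i+17, X_i + X_j = 𝔽_11527 ∖ {0}. -/

import Mathlib

open Pointwise

/-- The set of nonzero `n`-th power residues in `𝔽_p = ZMod p`. -/
def Hpow (p n : ℕ) : Set (ZMod p) := {x | ∃ u : (ZMod p)ˣ, (u : ZMod p) ^ n = x}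

/-- The coset `X_i = g^i · H` of the subgroup of `n`-th power residues. -/
noncomputable def Xc (p n : ℕ) [Fact p.Prime] (g : ZMod p) (i : ℤ) : Set (ZMod p) :=
  g ^ i • Hpow p n

instance : Fact (Nat.Prime 11527) := ⟨by norm_num⟩

/-!
Write `p - 1 = n * k`. For a primitive root `g`, `x ∈ X_i` iff `x ^ k = (g ^ k) ^ i`, so `X_i`
depends only on `i mod n` and the `X_i` partition `𝔽_p^×`. If `x ∈ X_c`, then `x ∈ X_i + X_j` iff
some `B ∈ X_{j-i}` has `1 + B ∈ X_{c-i}` (take `B = b / a`, conversely `a = x / (1 + B)`), and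
`0 ∈ X_i + X_j` iff `j ≡ i + m`, because `-1 = g ^ (k m) ∈ X_m` when `n = 2m` and `k` is odd.
Hence the three conditions say exactly that the pairs `(d, c)` realised by some `B ∈ X_d` with
`1 + B ∈ X_c` are all pairs except `(0, 0)`, `(m, 0)` and `(m, m)`. For `p = 11527`, `n = 34`,
`g = 5` this is checked by a table of witnesses for the realised pairs and by running through the
`339` elements `5 ^ (d + 34 t)` of `X_d` for the three excluded ones.
-/

theorem IsPrimitiveRoot.zpow_eq_zpow_iff_intCast_eq {K : Type*} [Field K] {w : K} {n : ℕ}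
    (hw : IsPrimitiveRoot w n) (hn : n ≠ 0) (i j : ℤ) : w ^ i = w ^ j ↔ (i : ZMod n) = j := by
  have hw0 : w ≠ 0 := hw.ne_zero hn
  rw [← div_eq_one_iff_eq (zpow_ne_zero j hw0), ← zpow_sub₀ hw0, hw.zpow_eq_one_iff_dvd, eq_comm,
    ZMod.intCast_eq_intCast_iff_dvd_sub]

instance neZero_sub_one_of_prime {p : ℕ} [Fact p.Prime] : NeZero (p - 1) :=
  ⟨(Nat.sub_pos_of_lt (Fact.out : p.Prime).one_lt).ne'⟩

section Cosets

variable {p n k : ℕ} [Fact p.Prime] {g x : ZMod p}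

lemma one_mem_Hpow : (1 : ZMod p) ∈ Hpow p n := ⟨1, by simp⟩

lemma mul_mem_Hpow {y : ZMod p} (hx : x ∈ Hpow p n) (hy : y ∈ Hpow p n) :
    x * y ∈ Hpow p n := by
  obtain ⟨u, rfl⟩ := hx
  obtain ⟨v, rfl⟩ := hy
  exact ⟨u * v, by rw [Units.val_mul, mul_pow]⟩

lemma inv_mem_Hpow (hx : x ∈ Hpow p n) : x⁻¹ ∈ Hpow p n := by
  obtain ⟨u, rfl⟩ := hx
  exact ⟨u⁻¹, by rw [Units.val_inv_eq_inv_val, inv_pow]⟩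

lemma ne_zero_of_mem_Hpow (hx : x ∈ Hpow p n) : x ≠ 0 := by
  obtain ⟨u, rfl⟩ := hx
  exact pow_ne_zero _ u.ne_zero

lemma mem_Xc_iff (hg : g ≠ 0) {i : ℤ} : x ∈ Xc p n g i ↔ (g ^ i)⁻¹ * x ∈ Hpow p n :=
  Set.mem_smul_set_iff_inv_smul_mem₀ (zpow_ne_zero i hg) _ _

lemma zpow_mem_Xc (i : ℤ) : g ^ i ∈ Xc p n g i := ⟨1, one_mem_Hpow, mul_one _⟩

lemma ne_zero_of_mem_Xc (hg : g ≠ 0) {i : ℤ} (hx : x ∈ Xc p n g i) : x ≠ 0 := by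
  obtain ⟨y, hy, rfl⟩ := hx
  exact mul_ne_zero (zpow_ne_zero i hg) (ne_zero_of_mem_Hpow hy)

lemma mul_mem_Xc (hg : g ≠ 0) {a b : ZMod p} {i j : ℤ} (ha : a ∈ Xc p n g i)
    (hb : b ∈ Xc p n g j) : a * b ∈ Xc p n g (i + j) := by
  obtain ⟨u, hu, rfl⟩ := ha
  obtain ⟨v, hv, rfl⟩ := hb
  refine ⟨u * v, mul_mem_Hpow hu hv, ?_⟩
  simp only [smul_eq_mul, zpow_add₀ hg]
  ring

lemma inv_mem_Xc {a : ZMod p} {i : ℤ} (ha : a ∈ Xc p n g i) : a⁻¹ ∈ Xc p n g (-i) := by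
  obtain ⟨u, hu, rfl⟩ := ha
  exact ⟨u⁻¹, inv_mem_Hpow hu, by simp only [smul_eq_mul, mul_inv, zpow_neg]⟩

lemma mem_Xc_add_Xc_iff (hg : g ≠ 0) {i j c : ℤ} (hx : x ∈ Xc p n g c) :
    x ∈ Xc p n g i + Xc p n g j ↔ ∃ B ∈ Xc p n g (j - i), 1 + B ∈ Xc p n g (c - i) := by
  constructor
  · rintro ⟨a, ha, b, hb, rfl⟩
    have ha0 := ne_zero_of_mem_Xc hg ha
    refine ⟨a⁻¹ * b, ?_, ?_⟩
    · simpa only [neg_add_eq_sub] using mul_mem_Xc hg (inv_mem_Xc ha) hb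
    · rw [show 1 + a⁻¹ * b = a⁻¹ * (a + b) by field_simp]
      simpa only [neg_add_eq_sub] using mul_mem_Xc hg (inv_mem_Xc ha) hx
  · rintro ⟨B, hB, hB1⟩
    have hB10 := ne_zero_of_mem_Xc hg hB1
    have ha : (1 + B)⁻¹ * x ∈ Xc p n g i := by
      simpa only [neg_sub, sub_add_cancel] using mul_mem_Xc hg (inv_mem_Xc hB1) hx
    refine ⟨_, ha, _, by simpa only [add_sub_cancel] using mul_mem_Xc hg ha hB, ?_⟩
    field_simp

end Cosets

section PrimitiveRoot

variable {p n k : ℕ} [Fact p.Prime] {g x : ZMod p}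

lemma isPrimitiveRoot_pow_of_mul_eq (hg : IsPrimitiveRoot g (p - 1)) (hnk : n * k = p - 1) :
    IsPrimitiveRoot (g ^ k) n :=
  hg.pow (NeZero.pos _) (by rw [← hnk, mul_comm])

lemma mem_Hpow_iff_pow_eq_one (hg : IsPrimitiveRoot g (p - 1)) (hnk : n * k = p - 1) :
    x ∈ Hpow p n ↔ x ^ k = 1 := by
  constructor
  · rintro ⟨u, rfl⟩
    rw [← pow_mul, hnk, ZMod.pow_card_sub_one_eq_one u.ne_zero]
  · intro hx
    obtain ⟨t, -, rfl⟩ := hg.eq_pow_of_pow_eq_one (by rw [← hnk, mul_comm, pow_mul, hx, one_pow])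
    obtain ⟨s, rfl⟩ : n ∣ t := by
      rw [← pow_mul, hg.pow_eq_one_iff_dvd, ← hnk] at hx
      have hk : k ≠ 0 := right_ne_zero_of_mul (hnk.trans_ne (NeZero.ne _))
      exact (Nat.mul_dvd_mul_iff_right (Nat.pos_of_ne_zero hk)).mp hx
    exact ⟨(hg.isUnit (NeZero.ne _)).unit ^ s, by simp only [Units.val_pow_eq_pow_val,
      IsUnit.unit_spec, ← pow_mul, mul_comm]⟩

lemma mem_Xc_iff_pow (hg : IsPrimitiveRoot g (p - 1)) (hnk : n * k = p - 1) {i : ℤ} :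
    x ∈ Xc p n g i ↔ x ^ k = (g ^ k) ^ i := by
  have hg0 : g ≠ 0 := hg.ne_zero (NeZero.ne _)
  rw [mem_Xc_iff hg0, mem_Hpow_iff_pow_eq_one hg hnk, mul_pow, inv_pow,
    inv_mul_eq_one₀ (pow_ne_zero _ (zpow_ne_zero i hg0)), eq_comm, ← zpow_natCast (g ^ i),
    zpow_comm, zpow_natCast]

lemma exists_mem_Xc (hg : IsPrimitiveRoot g (p - 1)) (hx : x ≠ 0) :
    ∃ t : ℤ, x ∈ Xc p n g t := by
  obtain ⟨t, -, rfl⟩ := hg.eq_pow_of_pow_eq_one (ZMod.pow_card_sub_one_eq_one hx)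
  exact ⟨t, by simpa only [zpow_natCast] using zpow_mem_Xc (n := n) (t : ℤ)⟩

lemma pow_zpow_eq_pow_zpow_iff (hg : IsPrimitiveRoot g (p - 1)) (hnk : n * k = p - 1) (i j : ℤ) :
    (g ^ k) ^ i = (g ^ k) ^ j ↔ (i : ZMod n) = j :=
  (isPrimitiveRoot_pow_of_mul_eq hg hnk).zpow_eq_zpow_iff_intCast_eq
    (left_ne_zero_of_mul (hnk.trans_ne (NeZero.ne _))) i j

lemma intCast_eq_of_mem_Xc (hg : IsPrimitiveRoot g (p - 1)) (hnk : n * k = p - 1) {i j : ℤ}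
    (hi : x ∈ Xc p n g i) (hj : x ∈ Xc p n g j) : (i : ZMod n) = j := by
  rw [mem_Xc_iff_pow hg hnk] at hi hj
  exact (pow_zpow_eq_pow_zpow_iff hg hnk i j).mp (hi.symm.trans hj)

lemma Xc_eq_of_intCast_eq (hg : IsPrimitiveRoot g (p - 1)) (hnk : n * k = p - 1) {i j : ℤ}
    (h : (i : ZMod n) = j) : Xc p n g i = Xc p n g j := by
  ext x
  rw [mem_Xc_iff_pow hg hnk, mem_Xc_iff_pow hg hnk, (pow_zpow_eq_pow_zpow_iff hg hnk i j).mpr h]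

lemma exists_pow_of_mem_Xc (hg : IsPrimitiveRoot g (p - 1)) (hnk : n * k = p - 1) {i : ℤ}
    (hx : x ∈ Xc p n g i) : ∃ t < k, x = g ^ i * (g ^ n) ^ t := by
  have hg0 : g ≠ 0 := hg.ne_zero (NeZero.ne _)
  have : NeZero k := ⟨right_ne_zero_of_mul (hnk.trans_ne (NeZero.ne _))⟩
  rw [mem_Xc_iff hg0, mem_Hpow_iff_pow_eq_one hg hnk] at hx
  obtain ⟨t, ht, h⟩ := (hg.pow (NeZero.pos _) hnk.symm).eq_pow_of_pow_eq_one hx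
  exact ⟨t, ht, by rw [h, mul_inv_cancel_left₀ (zpow_ne_zero i hg0)]⟩

lemma neg_one_mem_Xc {m : ℕ} (hg : IsPrimitiveRoot g (p - 1)) (hnk : n * k = p - 1)
    (hnm : n = 2 * m) (hk : Odd k) : (-1 : ZMod p) ∈ Xc p n g m := by
  rw [mem_Xc_iff_pow hg hnk, hk.neg_one_pow, zpow_natCast, ← pow_mul]
  exact (hg.pow (NeZero.pos _) (by rw [← hnk, hnm]; ring)).eq_neg_one_of_two_right.symm

end PrimitiveRoot

section Criterion

variable {p n k m : ℕ} [Fact p.Prime] {g : ZMod p}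

lemma zero_mem_Xc_add_Xc_iff (hg : IsPrimitiveRoot g (p - 1)) (hnk : n * k = p - 1)
    (hnm : n = 2 * m) (hk : Odd k) {i j : ℤ} :
    (0 : ZMod p) ∈ Xc p n g i + Xc p n g j ↔ (j : ZMod n) = ((i + m : ℤ) : ZMod n) := by
  have hg0 : g ≠ 0 := hg.ne_zero (NeZero.ne _)
  have neg_mem {a : ZMod p} (ha : a ∈ Xc p n g i) : -a ∈ Xc p n g (i + m) := by
    simpa only [neg_one_mul, add_comm] using mul_mem_Xc hg0 (neg_one_mem_Xc hg hnk hnm hk) ha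
  constructor
  · rintro ⟨a, ha, b, hb, hab⟩
    rw [eq_neg_of_add_eq_zero_right hab] at hb
    exact intCast_eq_of_mem_Xc hg hnk hb (neg_mem ha)
  · intro h
    rw [Xc_eq_of_intCast_eq hg hnk h]
    exact ⟨_, zpow_mem_Xc i, _, neg_mem (zpow_mem_Xc i), add_neg_cancel _⟩

lemma natCast_ne_zero_of_eq_two_mul (hn : n ≠ 0) (hnm : n = 2 * m) : (m : ZMod n) ≠ 0 := by
  rw [Ne, ZMod.natCast_eq_zero_iff]
  intro h
  have := Nat.le_of_dvd (by omega) h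
  omega

lemma mem_iUnion_Xc_iff (hg : IsPrimitiveRoot g (p - 1)) (hnk : n * k = p - 1)
    (P : ZMod n → Prop) {x : ZMod p} {c : ℤ} (hx : x ∈ Xc p n g c) :
    x ∈ ⋃ j ∈ {j : ℤ | P j}, Xc p n g j ↔ P c := by
  simp only [Set.mem_iUnion, Set.mem_ofPred_eq, exists_prop]
  constructor
  · rintro ⟨j, hj, hxj⟩
    rwa [intCast_eq_of_mem_Xc hg hnk hxj hx] at hj
  · exact fun h => ⟨c, h, hx⟩

lemma zero_notMem_iUnion_Xc (hg : g ≠ 0) (S : Set ℤ) : (0 : ZMod p) ∉ ⋃ j ∈ S, Xc p n g j := by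
  simp only [Set.mem_iUnion, not_exists]
  exact fun j _ h => ne_zero_of_mem_Xc hg h rfl

/-- The cyclotomic number `(d, c)`, the number of `B ∈ X_d` with `1 + B ∈ X_c`, vanishes exactly
at `(0, 0)`, `(m, 0)` and `(m, m)`. -/
def HasRamseyCyclotomicNumbers (p n m : ℕ) [Fact p.Prime] (g : ZMod p) : Prop :=
  ∀ d c : ℤ, (∃ B ∈ Xc p n g d, 1 + B ∈ Xc p n g c) ↔
    ¬(((d : ZMod n) = 0 ∧ (c : ZMod n) = 0) ∨
      ((d : ZMod n) = m ∧ ((c : ZMod n) = 0 ∨ (c : ZMod n) = m)))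

theorem Xc_add_Xc_self (hg : IsPrimitiveRoot g (p - 1)) (hnk : n * k = p - 1) (hnm : n = 2 * m)
    (hk : Odd k) (hcyc : HasRamseyCyclotomicNumbers p n m g) (i : ℤ) :
    Xc p n g i + Xc p n g i = ⋃ j ∈ {j : ℤ | (j : ZMod n) ≠ (i : ZMod n)}, Xc p n g j := by
  have hg0 : g ≠ 0 := hg.ne_zero (NeZero.ne _)
  have hm := natCast_ne_zero_of_eq_two_mul (left_ne_zero_of_mul (hnk.trans_ne (NeZero.ne _))) hnm
  ext x
  rcases eq_or_ne x 0 with rfl | hx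
  · refine iff_of_false ?_ (zero_notMem_iUnion_Xc hg0 _)
    rw [zero_mem_Xc_add_Xc_iff hg hnk hnm hk, Int.cast_add, Int.cast_natCast]
    simpa using hm
  · obtain ⟨c, hc⟩ := exists_mem_Xc hg hx
    rw [mem_Xc_add_Xc_iff hg0 hc, hcyc, mem_iUnion_Xc_iff hg hnk (· ≠ (i : ZMod n)) hc]
    simp [sub_eq_zero, hm.symm]

theorem Xc_add_Xc_add_half (hg : IsPrimitiveRoot g (p - 1)) (hnk : n * k = p - 1)
    (hnm : n = 2 * m) (hk : Odd k) (hcyc : HasRamseyCyclotomicNumbers p n m g) (i : ℤ) :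
    Xc p n g i + Xc p n g (i + m) = {(0 : ZMod p)} ∪ ⋃ j ∈ {j : ℤ | (j : ZMod n) ≠ (i : ZMod n) ∧
        (j : ZMod n) ≠ ((i + m : ℤ) : ZMod n)}, Xc p n g j := by
  have hg0 : g ≠ 0 := hg.ne_zero (NeZero.ne _)
  ext x
  rcases eq_or_ne x 0 with rfl | hx
  · exact iff_of_true ((zero_mem_Xc_add_Xc_iff hg hnk hnm hk).mpr rfl) (Or.inl rfl)
  · obtain ⟨c, hc⟩ := exists_mem_Xc hg hx
    rw [mem_Xc_add_Xc_iff hg0 hc, hcyc, Set.mem_union, Set.mem_singleton_iff, or_iff_right hx,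
      mem_iUnion_Xc_iff hg hnk (fun z => z ≠ (i : ZMod n) ∧ z ≠ ((i + m : ℤ) : ZMod n)) hc]
    push_cast
    simp only [add_sub_cancel_left, sub_eq_iff_eq_add', add_zero, true_and]
    tauto

theorem Xc_add_Xc_of_ne (hg : IsPrimitiveRoot g (p - 1)) (hnk : n * k = p - 1)
    (hnm : n = 2 * m) (hk : Odd k) (hcyc : HasRamseyCyclotomicNumbers p n m g) (i j : ℤ)
    (hji : (j : ZMod n) ≠ (i : ZMod n)) (hjim : (j : ZMod n) ≠ ((i + m : ℤ) : ZMod n)) :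
    Xc p n g i + Xc p n g j = {(0 : ZMod p)}ᶜ := by
  have hg0 : g ≠ 0 := hg.ne_zero (NeZero.ne _)
  ext x
  rcases eq_or_ne x 0 with rfl | hx
  · exact iff_of_false (mt (zero_mem_Xc_add_Xc_iff hg hnk hnm hk).mp hjim) (by simp)
  · obtain ⟨c, hc⟩ := exists_mem_Xc hg hx
    rw [mem_Xc_add_Xc_iff hg0 hc, hcyc]
    push_cast at hjim ⊢
    simp [sub_eq_iff_eq_add', hji, hjim, hx]

end Criterion

section Computation

variable {p n k : ℕ} [Fact p.Prime] {g : ZMod p}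

lemma natCast_pow_eq_one_iff (a e : ℕ) : (a : ZMod p) ^ e = 1 ↔ a ^ e ≡ 1 [MOD p] := by
  rw [← Nat.cast_pow, ← Nat.cast_one, ZMod.natCast_eq_natCast_iff]

lemma natCast_mem_Xc_iff {a : ℕ} (ha : IsPrimitiveRoot (a : ZMod p) (p - 1))
    (hnk : n * k = p - 1) (x d : ℕ) : (x : ZMod p) ∈ Xc p n a d ↔ x ^ k ≡ a ^ (k * d) [MOD p] := by
  rw [mem_Xc_iff_pow ha hnk, zpow_natCast, ← pow_mul, ← Nat.cast_pow, ← Nat.cast_pow,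
    ZMod.natCast_eq_natCast_iff]

lemma exists_natCast_of_mem_Xc {a d : ℕ} (ha : IsPrimitiveRoot (a : ZMod p) (p - 1))
    (hnk : n * k = p - 1) {B : ZMod p} (hB : B ∈ Xc p n a d) :
    ∃ t < k, B = ((a ^ (d + n * t) % p : ℕ) : ZMod p) := by
  obtain ⟨t, ht, rfl⟩ := exists_pow_of_mem_Xc ha hnk hB
  exact ⟨t, ht, by rw [ZMod.natCast_mod, zpow_natCast, pow_add, pow_mul, Nat.cast_mul,
    Nat.cast_pow, Nat.cast_pow, Nat.cast_pow]⟩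

lemma Xc_natCast_val (hg : IsPrimitiveRoot g (p - 1)) (hnk : n * k = p - 1) [NeZero n]
    (d : ℤ) : Xc p n g ((d : ZMod n).val : ℤ) = Xc p n g d :=
  Xc_eq_of_intCast_eq hg hnk (by rw [Int.cast_natCast, ZMod.natCast_zmod_val])

end Computation

theorem isPrimitiveRoot_five : IsPrimitiveRoot ((5 : ℕ) : ZMod 11527) 11526 := by
  have hord : orderOf ((5 : ℕ) : ZMod 11527) = 11526 := by
    refine orderOf_eq_of_pow_and_pow_div_prime (by norm_num)
      ((natCast_pow_eq_one_iff _ _).mpr (by decide +kernel)) fun q hq hqd => ?_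
    have hqf : q ∈ Nat.primeFactorsList 11526 :=
      (Nat.mem_primeFactorsList (by norm_num)).mpr ⟨hq, hqd⟩
    simp only [Nat.primeFactorsList_ofNat, List.mem_cons, List.not_mem_nil, or_false] at hqf
    rw [Ne, natCast_pow_eq_one_iff]
    rcases hqf with rfl | rfl | rfl | rfl <;> decide +kernel
  exact hord ▸ IsPrimitiveRoot.orderOf _

-- Row `d`, column `c`: some `B ∈ X_d` with `1 + B ∈ X_c` for `g = 5`; the entries `0` at the
-- three excluded pairs are placeholders.
def cyclotomicWitnessTable : List (List ℕ) :=
  [[0, 897, 4875, 753, 1352, 8001, 1, 5884, 5875, 7279, 1538, 9246, 5749, 2036, 3787, 3889, 9034,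
    2993, 7873, 7659, 6354, 10905, 9702, 8386, 4981, 2186, 1515, 7557, 1017, 6831, 10482, 5738,
    10296, 10109],
   [5723, 7408, 6302, 6321, 10180, 11053, 8278, 11344, 122, 3739, 9663, 9848, 5424, 4437, 5085,
    5691, 7918, 6366, 6721, 8080, 7575, 4828, 8091, 518, 9796, 6805, 9511, 3438, 3024, 5, 5372,
    7690, 85, 10683],
   [5874, 4670, 10256, 1086, 834, 10658, 5401, 6935, 11072, 3195, 2590, 3869, 7168, 2295, 25, 4493,
    5819, 7035, 9439, 4689, 3294, 2459, 8776, 866, 3357, 7831, 10971, 10746, 6303, 8551, 2371, 2164,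
    9157, 5009],
   [10481, 1259, 6041, 9299, 10938, 10820, 8461, 328, 5430, 6824, 3612, 9532, 6109, 5695, 7622,
    5792, 2125, 5172, 4330, 7818, 7699, 4751, 2833, 3050, 1909, 4943, 9252, 9917, 125, 906, 5742,
    7182, 5261, 8174],
   [1661, 4530, 5817, 1329, 2538, 9912, 3840, 6295, 7329, 9434, 6339, 3642, 152, 9154, 8368, 10123,
    2806, 3168, 9955, 7115, 9770, 4385, 4509, 3529, 9415, 3914, 387, 8526, 625, 7645, 6127, 7151,
    7992, 6533],
   [10456, 4507, 10227, 3505, 3269, 506, 2503, 11018, 3667, 6683, 1062, 6645, 7581, 8641, 2742,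
    6677, 1935, 8953, 4653, 3125, 11189, 4104, 8421, 8391, 7673, 11123, 7655, 3143, 8200, 8305, 994,
    6527, 2064, 1174],
   [2919, 6944, 6808, 10320, 7524, 859, 7064, 3055, 3694, 7536, 9837, 4872, 6419, 8347, 10184,
    10726, 2034, 8982, 9675, 5310, 10171, 9507, 6693, 3097, 4098, 8728, 9581, 9348, 3841, 988, 6236,
    2223, 3784, 9326],
   [10848, 5492, 5116, 10384, 6296, 6575, 6943, 1796, 4596, 7522, 5611, 1427, 2267, 8963, 3099,
    1055, 3077, 9041, 5266, 4940, 7393, 1306, 2289, 139, 9735, 10329, 8874, 3846, 7678, 632, 10,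
    10986, 9413, 10810],
   [11335, 9214, 681, 5575, 10624, 7416, 3029, 11445, 3809, 2784, 3968, 8980, 1694, 7942, 99,
    10234, 957, 2567, 4721, 3858, 5001, 3668, 4681, 8822, 10405, 2840, 5537, 532, 10714, 5953, 1646,
    8426, 11453, 1073],
   [3405, 6259, 10503, 11117, 393, 1094, 1308, 9529, 3028, 9596, 5945, 10718, 5030, 1523, 11157,
    4785, 7549, 7754, 3717, 10567, 10860, 4853, 2069, 1945, 8470, 8230, 4631, 7763, 8313, 5062,
    6948, 3475, 1484, 3632],
   [6569, 9677, 774, 4234, 10501, 4189, 6540, 6407, 6891, 3009, 285, 1211, 2096, 4661, 2256, 9908,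
    6633, 9477, 1242, 6750, 479, 7482, 1872, 8978, 7680, 10664, 5848, 2466, 11337, 101, 6727, 159,
    1965, 1374],
   [9761, 4436, 4521, 10480, 2667, 505, 9825, 1277, 7212, 2517, 6870, 5255, 5069, 339, 9791, 3518,
    4355, 2553, 9360, 4296, 9643, 3432, 5006, 7685, 3494, 9601, 6397, 6250, 9190, 10581, 2395,
    11280, 8947, 9646],
   [5943, 10292, 7221, 6797, 6063, 9938, 7876, 2847, 2525, 10653, 11369, 1068, 2107, 9294, 1495,
    2122, 5181, 1695, 6385, 1146, 1238, 10590, 7095, 2089, 10248, 10154, 982, 9793, 3521, 448, 4068,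
    3017, 7955, 10324],
   [4662, 2240, 3558, 7261, 3931, 8406, 8475, 9040, 3582, 10708, 10610, 10737, 8548, 3735, 2708,
    362, 3460, 8871, 8348, 5111, 5730, 5399, 7475, 5290, 1958, 5782, 2857, 4799, 10931, 7299, 7157,
    5352, 10535, 7693],
   [8629, 2794, 10550, 7432, 6567, 9774, 9836, 6942, 6263, 11200, 7166, 2394, 10619, 8547, 3825,
    3396, 571, 11074, 3898, 3884, 5490, 7506, 941, 7159, 5856, 2501, 7449, 9128, 1724, 7794, 8321,
    6758, 4262, 3706],
   [6417, 9892, 6585, 7099, 8564, 702, 2842, 6020, 5811, 4076, 1241, 8154, 10065, 10736, 3304, 129,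
    7893, 2443, 6226, 8261, 443, 4705, 6703, 9781, 7003, 2188, 10258, 2762, 1280, 7024, 8178, 11003,
    4389, 3519],
   [4217, 9035, 7046, 2683, 1368, 471, 1793, 7427, 2797, 1535, 9724, 5057, 7983, 434, 6245, 4932,
    10156, 10669, 7241, 6400, 3352, 4993, 6309, 2215, 354, 10453, 2283, 2807, 1441, 6724, 10461,
    8519, 4884, 7515],
   [0, 9627, 2458, 6951, 9954, 7759, 11033, 1888, 3440, 10566, 3279, 2170, 3225, 6197, 9441, 9558,
    5233, 0, 5803, 5982, 1366, 1878, 6157, 8965, 2568, 11415, 8014, 2508, 7891, 7286, 2231, 6840,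
    2355, 7296],
   [4874, 10244, 4868, 4598, 5961, 4708, 7731, 10149, 1682, 4630, 6335, 10850, 174, 6274, 5489,
    5673, 11146, 10967, 6862, 6856, 10103, 4225, 4318, 248, 6722, 7874, 3111, 3662, 6762, 763, 3443,
    9716, 10016, 1033],
   [8410, 5074, 5311, 319, 10556, 11463, 8727, 9495, 1667, 10063, 8142, 9693, 4028, 5165, 1316,
    1240, 11096, 3815, 90, 9543, 11226, 227, 4074, 5112, 5065, 4391, 9324, 4407, 10678, 6783, 10756,
    4698, 3859, 9553],
   [9109, 7282, 9054, 1882, 6672, 7672, 10201, 6200, 8613, 7548, 10022, 2506, 4067, 1135, 10861,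
    450, 4210, 5519, 3501, 7469, 9473, 999, 5053, 436, 10172, 10621, 6580, 117, 2316, 6129, 9372,
    131, 6427, 8843],
   [2764, 414, 822, 9096, 624, 6030, 7975, 7591, 3159, 655, 6032, 2211, 7094, 11185, 7793, 11355,
    10964, 8484, 10689, 5713, 11135, 623, 6835, 4002, 3779, 10306, 2328, 9081, 9523, 4897, 8197,
    4959, 9508, 9927],
   [1273, 3760, 6836, 9298, 3374, 759, 5294, 11178, 3122, 1507, 6932, 10900, 5007, 3328, 7165, 113,
    3527, 7839, 889, 5422, 5149, 8483, 10899, 5015, 8712, 2293, 4268, 7337, 2404, 6404, 3120, 10748,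
    2925, 5321],
   [493, 3795, 4083, 6108, 8966, 10310, 7535, 3098, 8979, 11126, 10350, 8317, 11465, 2153, 2104,
    9782, 2380, 4195, 3248, 565, 9813, 1981, 9023, 11303, 7273, 3416, 7834, 2691, 949, 7160, 4684,
    1690, 4614, 5343],
   [16, 8753, 1928, 5741, 1328, 5857, 465, 3094, 4589, 5553, 7379, 2825, 7486, 10534, 366, 9905,
    6723, 3579, 3661, 7004, 8713, 8888, 508, 1186, 8838, 10520, 10105, 4745, 10249, 9092, 10407,
    9612, 6222, 496],
   [6492, 2632, 9859, 10561, 4711, 2502, 7770, 3943, 1132, 2659, 6562, 9640, 2314, 3258, 2605,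
    1502, 2483, 2849, 6778, 1028, 8056, 5462, 4156, 10948, 80, 2598, 8498, 8616, 9278, 671, 11418,
    8920, 10367, 9274],
   [3355, 5140, 1463, 9919, 2718, 10019, 400, 2329, 43, 6859, 3187, 4763, 4269, 3777, 3214, 8499,
    10836, 501, 7510, 2195, 4702, 2092, 888, 9406, 7217, 2631, 983, 10945, 5849, 9253, 5649, 326,
    9150, 9991],
   [3987, 5191, 8210, 8802, 2969, 2063, 8579, 761, 8821, 2672, 118, 4778, 8072, 8617, 2692, 2000,
    10460, 3439, 4440, 1628, 2505, 9926, 10747, 2103, 6256, 4408, 10926, 11241, 10587, 157, 5248,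
    922, 9685, 7315],
   [6192, 10513, 3805, 10097, 5816, 1075, 9619, 10000, 9737, 7901, 3522, 1933, 3489, 5779, 6827,
    2209, 8226, 8408, 6550, 4851, 1994, 590, 4881, 7534, 8504, 637, 3186, 10315, 3318, 9429, 1703,
    11438, 2665, 4610],
   [4924, 11195, 7498, 7906, 5382, 1758, 11523, 4180, 3089, 7257, 11045, 9665, 8146, 5375, 2793,
    3892, 1201, 6467, 5672, 2577, 8334, 5841, 3925, 7939, 3962, 9291, 8529, 3383, 6457, 11081, 6989,
    6119, 5467, 689],
   [30, 11, 7076, 11507, 7361, 2217, 9373, 5185, 3752, 4281, 2909, 9455, 6151, 9281, 10238, 9873,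
    4949, 9117, 3742, 9231, 5114, 5564, 9297, 3821, 4271, 1566, 2261, 5391, 9935, 8098, 7791, 2714,
    9691, 8179],
   [5288, 5084, 2871, 2043, 3476, 3124, 1450, 5353, 9480, 10112, 6790, 2516, 2636, 47, 4374, 11085,
    6516, 377, 4766, 9878, 757, 1691, 772, 5389, 11004, 11427, 3219, 10463, 5909, 3018, 6332, 7701,
    1820, 8161],
   [1968, 5853, 8455, 737, 275, 11027, 1053, 138, 11087, 10343, 8912, 2828, 10896, 1653, 6522,
    3032, 10417, 2366, 776, 8019, 4093, 10046, 3282, 8991, 7903, 6491, 8516, 6448, 1885, 3924, 9100,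
    7179, 3563, 235],
   [5018, 9979, 3707, 10374, 8093, 7999, 1314, 5265, 8109, 8372, 303, 7694, 3880, 10073, 5010,
    11318, 4883, 8761, 6121, 975, 9401, 8938, 4967, 9492, 8449, 7773, 9027, 1175, 6211, 7981, 9425,
    4934, 3633, 1370]]

def cyclotomicWitness (d c : ZMod 34) : ℕ := (cyclotomicWitnessTable.getD d.val []).getD c.val 0

lemma cyclotomicWitness_spec : ∀ d c : ZMod 34,
    ¬((d = 0 ∧ c = 0) ∨ (d = (17 : ℕ) ∧ (c = 0 ∨ c = (17 : ℕ)))) →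
      cyclotomicWitness d c ^ 339 ≡ 5 ^ (339 * d.val) [MOD 11527] ∧
      (1 + cyclotomicWitness d c) ^ 339 ≡ 5 ^ (339 * c.val) [MOD 11527] := by
  decide +kernel

lemma not_modEq_of_excluded : ∀ d c : ZMod 34,
    ((d = 0 ∧ c = 0) ∨ (d = (17 : ℕ) ∧ (c = 0 ∨ c = (17 : ℕ)))) → ∀ t < 339,
      ¬(1 + 5 ^ (d.val + 34 * t) % 11527) ^ 339 ≡ 5 ^ (339 * c.val) [MOD 11527] := by
  decide +kernel

theorem hasRamseyCyclotomicNumbers_five : HasRamseyCyclotomicNumbers 11527 34 17 (5 : ℕ) := by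
  have hnk : 34 * 339 = 11527 - 1 := rfl
  intro d c
  rw [← Xc_natCast_val isPrimitiveRoot_five hnk d, ← Xc_natCast_val isPrimitiveRoot_five hnk c]
  generalize (d : ZMod 34) = d, (c : ZMod 34) = c
  constructor
  · rintro ⟨B, hB, hB1⟩ hexcl
    obtain ⟨t, ht, rfl⟩ := exists_natCast_of_mem_Xc isPrimitiveRoot_five hnk hB
    rw [← Nat.cast_one, ← Nat.cast_add, natCast_mem_Xc_iff isPrimitiveRoot_five hnk] at hB1
    exact not_modEq_of_excluded d c hexcl t ht hB1
  · intro hadm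
    obtain ⟨hB, hB1⟩ := cyclotomicWitness_spec d c hadm
    refine ⟨_, (natCast_mem_Xc_iff isPrimitiveRoot_five hnk _ _).mpr hB, ?_⟩
    rw [← Nat.cast_one, ← Nat.cast_add]
    exact (natCast_mem_Xc_iff isPrimitiveRoot_five hnk _ _).mpr hB1

/-- The cosets of the index-34 subgroup of `𝔽_11527ˣ` form a 17-color Directed
Ramsey algebra. -/
theorem stmt_15 : ∃ g : ZMod 11527, IsPrimitiveRoot g 11526 ∧
    (∀ i : ℤ, Xc 11527 34 g i + Xc 11527 34 g i =
      ⋃ j ∈ {j : ℤ | (j : ZMod 34) ≠ (i : ZMod 34)}, Xc 11527 34 g j) ∧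
    (∀ i : ℤ, Xc 11527 34 g i + Xc 11527 34 g (i + 17) =
      {(0 : ZMod 11527)} ∪ ⋃ j ∈ {j : ℤ | (j : ZMod 34) ≠ (i : ZMod 34) ∧
        (j : ZMod 34) ≠ ((i + 17 : ℤ) : ZMod 34)}, Xc 11527 34 g j) ∧
    (∀ i j : ℤ, (j : ZMod 34) ≠ (i : ZMod 34) → (j : ZMod 34) ≠ ((i + 17 : ℤ) : ZMod 34) →
      Xc 11527 34 g i + Xc 11527 34 g j = {(0 : ZMod 11527)}ᶜ) := by
  have hg := isPrimitiveRoot_five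
  have hnk : 34 * 339 = 11527 - 1 := rfl
  have hnm : 34 = 2 * 17 := rfl
  have hk : Odd 339 := by decide
  have hcyc := hasRamseyCyclotomicNumbers_five
  exact ⟨_, hg, Xc_add_Xc_self hg hnk hnm hk hcyc, Xc_add_Xc_add_half hg hnk hnm hk hcyc,
    Xc_add_Xc_of_ne hg hnk hnm hk hcyc⟩
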